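/- Let (B^H_t)_{t≥0} be a fractional Brownian motion with Hurst index H ∈ (0,1) such that p = 1/H is a positive integer, and let Z be a standard normal random variable. Then there is a constant C > 0 such that for every N ≥ 1 and all i, j ≥ 0 with i ≠ j, |E[( (B^H_{t_{i+1}} − B^H_{t_i})^p − E[Z^p]/N )( (B^H_{t_{j+1}} − B^H_{t_j})^p − E[Z^p]/N )]| ≤ C N^{−2} |ρ_H(i−j)|, where ρ_H(v) = (1/2)(|v+1|^{2H} + |v−1|^{2H} − 2|v|^{2H}) for v ∈ ℤ. -/

import Mathlib

open MeasureTheory ProbabilityTheory Filter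

noncomputable section

/-- A (centered or not) Gaussian process: every finite linear combination of its
values has a (possibly degenerate) Gaussian law. -/
def IsGaussianProcess {Ω : Type*} [MeasurableSpace Ω] (P : Measure Ω)
    (X : ℝ → Ω → ℝ) : Prop :=
  (∀ t : ℝ, Measurable (X t)) ∧
  ∀ (n : ℕ) (t : Fin n → ℝ) (c : Fin n → ℝ), ∃ m : ℝ, ∃ v : NNReal,
    P.map (fun ω => ∑ i, c i * X (t i) ω) = gaussianReal m v

/-- A fractional Brownian motion with Hurst parameter `H`: a centered Gaussian
process with covariance `E[B_s B_t] = (1/2)(s^{2H} + t^{2H} - |t-s|^{2H})`. -/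
structure IsFBM {Ω : Type*} [MeasurableSpace Ω] (P : Measure Ω) (H : ℝ)
    (B : ℝ → Ω → ℝ) : Prop where
  gaussian : IsGaussianProcess P B
  centered : ∀ t : ℝ, 0 ≤ t → ∫ ω, B t ω ∂P = 0
  cov : ∀ s t : ℝ, 0 ≤ s → 0 ≤ t →
    ∫ ω, B s ω * B t ω ∂P = (1/2) * (s ^ (2*H) + t ^ (2*H) - |t - s| ^ (2*H))


/-- The `q`-th moment of a standard normal random variable. -/
def gaussMoment (q : ℕ) : ℝ := ∫ x : ℝ, x ^ q ∂(gaussianReal 0 1)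

/-- The correlation function of the unit-spacing increments of a fBm:
`ρ_H(v) = (1/2)(|v+1|^{2H} + |v-1|^{2H} - 2|v|^{2H})` for `v ∈ ℤ`. -/
def rhoH (H : ℝ) (v : ℤ) : ℝ :=
  (1/2) * (|(v:ℝ) + 1| ^ (2*H) + |(v:ℝ) - 1| ^ (2*H) - 2 * |(v:ℝ)| ^ (2*H))

/-!
The two increments `U, V` form a centered Gaussian pair with common variance `σ² = N^{-2H}` and
correlation `ρ = ρ_H(i - j)`. Since `a U + V` is Gaussian,
`E[(a U + V)^{2p}] = E[Z^{2p}] σ^{2p} (a² + 2ρa + 1)^p`, and comparing the coefficients of `a^p`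
gives `E[U^p V^p] = E[Z^{2p}] σ^{2p} g_p(ρ) / C(2p, p)` with `g_p = corrPoly p`. For independent
`U, V` (`ρ = 0`) the left side is `E[U^p] E[V^p]`, so the covariance of `U^p` and `V^p` is
`σ^{2p} E[Z^{2p}] / C(2p, p) · (g_p(ρ) - g_p(0))`. As `|ρ| ≤ 1` this is `O(σ^{2p} |ρ|)`, and
`σ^{2p} = N^{-2}` because `pH = 1`.
-/

open Polynomial
open scoped NNReal

lemma gaussMoment_two : gaussMoment 2 = 1 := by
  have h := variance_of_integral_eq_zero (μ := gaussianReal 0 1) (X := fun x : ℝ ↦ x)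
    aemeasurable_id' integral_id_gaussianReal
  rw [variance_fun_id_gaussianReal] at h
  simpa [gaussMoment] using h.symm

lemma integrable_pow_gaussianReal (m : ℝ) (v : ℝ≥0) (n : ℕ) :
    Integrable (fun x : ℝ ↦ x ^ n) (gaussianReal m v) :=
  (memLp_id_gaussianReal n).integrable_norm_pow'.mono' (by fun_prop)
    (ae_of_all _ fun x ↦ (norm_pow x n).le)

lemma gaussianReal_map_sqrt_mul (v : ℝ≥0) :
    (gaussianReal 0 1).map (fun x ↦ √v * x) = gaussianReal 0 v := by
  rw [gaussianReal_map_const_mul, mul_zero, mul_one]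
  congr 1
  ext
  exact Real.sq_sqrt v.2

lemma integral_pow_gaussianReal_zero (v : ℝ≥0) (n : ℕ) :
    ∫ x, x ^ n ∂gaussianReal 0 v = √v ^ n * gaussMoment n := by
  rw [← gaussianReal_map_sqrt_mul, integral_map (by fun_prop) (by fun_prop), gaussMoment,
    ← integral_const_mul]
  simp_rw [mul_pow]

section GaussianLaw

variable {Ω : Type*} [MeasurableSpace Ω] {P : Measure Ω} {W : Ω → ℝ} {m : ℝ} {v : ℝ≥0}

lemma integrable_pow_of_map_eq_gaussianReal (hW : AEMeasurable W P)
    (h : P.map W = gaussianReal m v) (n : ℕ) : Integrable (fun ω ↦ W ω ^ n) P := by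
  have := integrable_pow_gaussianReal m v n
  rw [← h] at this
  exact this.comp_aemeasurable hW

lemma integral_of_map_eq_gaussianReal (hW : AEMeasurable W P)
    (h : P.map W = gaussianReal m v) : ∫ ω, W ω ∂P = m := by
  rw [← integral_id_gaussianReal (μ := m) (v := v), ← h, integral_map hW (by fun_prop)]

lemma integral_pow_of_map_eq_gaussianReal (hW : AEMeasurable W P)
    (h : P.map W = gaussianReal 0 v) (n : ℕ) :
    ∫ ω, W ω ^ n ∂P = √v ^ n * gaussMoment n := by
  rw [← integral_pow_gaussianReal_zero, ← h, integral_map hW (by fun_prop)]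

lemma integral_sq_of_map_eq_gaussianReal (hW : AEMeasurable W P)
    (h : P.map W = gaussianReal 0 v) : ∫ ω, W ω ^ 2 ∂P = v := by
  rw [integral_pow_of_map_eq_gaussianReal hW h, gaussMoment_two, mul_one,
    Real.sq_sqrt v.coe_nonneg]

end GaussianLaw

def corrPoly (p : ℕ) : ℝ[X] :=
  ((X ^ 2 + C (2 * X) * X + 1 : ℝ[X][X]) ^ p).coeff p

lemma eval_corrPoly (p : ℕ) (r : ℝ) :
    (corrPoly p).eval r = ((X ^ 2 + C (2 * r) * X + 1 : ℝ[X]) ^ p).coeff p := by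
  rw [corrPoly, ← coe_evalRingHom, ← coeff_map]
  simp

/-- Polarization: the mixed moment `E[U^p V^p]` is read off the coefficient of `a^p` in the
polynomial `a ↦ E[(a U + V)^(2p)]`. -/
lemma integral_pow_mul_pow_mul_choose {Ω : Type*} [MeasurableSpace Ω] {P : Measure Ω}
    {U V : Ω → ℝ} {p : ℕ} {c ρ : ℝ}
    (hint : ∀ k l : ℕ, Integrable (fun ω ↦ U ω ^ k * V ω ^ l) P)
    (h : ∀ a : ℝ, ∫ ω, (a * U ω + V ω) ^ (2 * p) ∂P = c * (a ^ 2 + 2 * ρ * a + 1) ^ p) :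
    (∫ ω, U ω ^ p * V ω ^ p ∂P) * (2 * p).choose p = c * (corrPoly p).eval ρ := by
  set M : ℕ → ℝ := fun k ↦ (2 * p).choose k * ∫ ω, U ω ^ k * V ω ^ (2 * p - k) ∂P
  have hpoly : ∑ k ∈ Finset.range (2 * p + 1), C (M k) * X ^ k
      = C c * (X ^ 2 + C (2 * ρ) * X + 1) ^ p := by
    refine Polynomial.funext fun a ↦ ?_
    simp only [eval_finsetSum, eval_mul, eval_C, eval_pow, eval_X, eval_add, eval_one]
    have hexpand : ∀ ω, (a * U ω + V ω) ^ (2 * p) = ∑ k ∈ Finset.range (2 * p + 1),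
        a ^ k * ((2 * p).choose k * (U ω ^ k * V ω ^ (2 * p - k))) := fun ω ↦ by
      rw [add_pow]
      exact Finset.sum_congr rfl fun k _ ↦ by ring
    simp_rw [← h, hexpand]
    rw [integral_finsetSum _ fun k _ ↦ ((hint k _).const_mul _).const_mul _]
    refine Finset.sum_congr rfl fun k _ ↦ ?_
    rw [integral_const_mul, integral_const_mul, mul_comm]
  have hcoeff := congrArg (coeff · p) hpoly
  simp only [finsetSum_coeff, coeff_C_mul, coeff_X_pow, mul_ite, mul_one, mul_zero,
    Finset.sum_ite_eq, Finset.mem_range] at hcoeff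
  rw [if_pos (by omega)] at hcoeff
  simp only [M, show 2 * p - p = p by omega] at hcoeff
  rw [eval_corrPoly, ← hcoeff, mul_comm]

lemma abs_pow_mul_pow_le (x y : ℝ) (k l : ℕ) :
    |x ^ k * y ^ l| ≤ |x ^ (k + l)| + |y ^ (k + l)| := by
  simp only [abs_mul, abs_pow, pow_add]
  rcases le_total |x| |y| with hxy | hxy
  · have := mul_le_mul_of_nonneg_right (pow_le_pow_left₀ (abs_nonneg x) hxy k)
      (pow_nonneg (abs_nonneg y) l)
    have : 0 ≤ |x| ^ k * |x| ^ l := by positivity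
    linarith
  · have := mul_le_mul_of_nonneg_left (pow_le_pow_left₀ (abs_nonneg y) hxy l)
      (pow_nonneg (abs_nonneg x) k)
    have : 0 ≤ |y| ^ k * |y| ^ l := by positivity
    linarith

structure IsCenteredGaussianPair {Ω : Type*} [MeasurableSpace Ω] (P : Measure Ω)
    (U V : Ω → ℝ) : Prop where
  measurable_left : Measurable U
  measurable_right : Measurable V
  map_eq : ∀ a b : ℝ, ∃ v : ℝ≥0, P.map (fun ω ↦ a * U ω + b * V ω) = gaussianReal 0 v

namespace IsCenteredGaussianPair

variable {Ω : Type*} [MeasurableSpace Ω] {P : Measure Ω} {U V : Ω → ℝ}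
  (hUV : IsCenteredGaussianPair P U V)
include hUV

lemma aemeasurable_linComb (a b : ℝ) : AEMeasurable (fun ω ↦ a * U ω + b * V ω) P :=
  (hUV.measurable_left.const_mul a |>.add (hUV.measurable_right.const_mul b)).aemeasurable

lemma integrable_linComb_pow (a b : ℝ) (n : ℕ) :
    Integrable (fun ω ↦ (a * U ω + b * V ω) ^ n) P :=
  let ⟨_, h⟩ := hUV.map_eq a b
  integrable_pow_of_map_eq_gaussianReal (hUV.aemeasurable_linComb a b) h n

lemma integrable_pow_mul_pow (k l : ℕ) : Integrable (fun ω ↦ U ω ^ k * V ω ^ l) P := by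
  have hU := (hUV.integrable_linComb_pow 1 0 (k + l)).abs
  have hV := (hUV.integrable_linComb_pow 0 1 (k + l)).abs
  simp only [one_mul, zero_mul, add_zero, zero_add] at hU hV
  refine (hU.add hV).mono' ?_ (ae_of_all _ fun ω ↦ abs_pow_mul_pow_le _ _ _ _)
  exact ((hUV.measurable_left.pow_const k).mul
    (hUV.measurable_right.pow_const l)).aestronglyMeasurable

lemma integral_linComb_pow_two_mul (a b : ℝ) (n : ℕ) :
    ∫ ω, (a * U ω + b * V ω) ^ (2 * n) ∂P
      = (∫ ω, (a * U ω + b * V ω) ^ 2 ∂P) ^ n * gaussMoment (2 * n) := by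
  obtain ⟨v, h⟩ := hUV.map_eq a b
  have hW := hUV.aemeasurable_linComb a b
  rw [integral_pow_of_map_eq_gaussianReal hW h, integral_sq_of_map_eq_gaussianReal hW h,
    pow_mul, Real.sq_sqrt v.coe_nonneg]

lemma integral_pow_left (n : ℕ) :
    ∫ ω, U ω ^ n ∂P = √(∫ ω, U ω ^ 2 ∂P) ^ n * gaussMoment n := by
  obtain ⟨v, h⟩ := hUV.map_eq 1 0
  simp only [one_mul, zero_mul, add_zero] at h
  rw [integral_pow_of_map_eq_gaussianReal hUV.measurable_left.aemeasurable h,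
    integral_sq_of_map_eq_gaussianReal hUV.measurable_left.aemeasurable h]

lemma integral_linComb_sq (a b : ℝ) :
    ∫ ω, (a * U ω + b * V ω) ^ 2 ∂P
      = a ^ 2 * ∫ ω, U ω ^ 2 ∂P + 2 * a * b * ∫ ω, U ω * V ω ∂P + b ^ 2 * ∫ ω, V ω ^ 2 ∂P := by
  have hUU := hUV.integrable_pow_mul_pow 2 0
  have hUV' := hUV.integrable_pow_mul_pow 1 1
  have hVV := hUV.integrable_pow_mul_pow 0 2
  simp only [pow_zero, mul_one, one_mul, pow_one] at hUU hUV' hVV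
  calc ∫ ω, (a * U ω + b * V ω) ^ 2 ∂P
      = ∫ ω, (a ^ 2 * U ω ^ 2 + 2 * a * b * (U ω * V ω)) + b ^ 2 * V ω ^ 2 ∂P := by
        congr 1 with ω; ring
    _ = _ := by
        rw [integral_add (by exact (hUU.const_mul _).add (hUV'.const_mul _)) (hVV.const_mul _),
          integral_add (hUU.const_mul _) (hUV'.const_mul _),
          integral_const_mul, integral_const_mul, integral_const_mul]

lemma symm : IsCenteredGaussianPair P V U :=
  ⟨hUV.measurable_right, hUV.measurable_left, fun a b ↦ by
    simpa only [add_comm] using hUV.map_eq b a⟩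

lemma memLp_pow (n : ℕ) : MemLp (fun ω ↦ U ω ^ n) 2 P := by
  refine (memLp_two_iff_integrable_sq
    (hUV.measurable_left.pow_const n).aestronglyMeasurable).mpr ?_
  simpa [← pow_mul] using hUV.integrable_pow_mul_pow (n * 2) 0

variable {σ ρ : ℝ} (hU : ∫ ω, U ω ^ 2 ∂P = σ ^ 2) (hV : ∫ ω, V ω ^ 2 ∂P = σ ^ 2)
  (hUV' : ∫ ω, U ω * V ω ∂P = σ ^ 2 * ρ)
include hU hV hUV'

lemma abs_le_one (hσ : σ ≠ 0) : |ρ| ≤ 1 := by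
  have hplus := hUV.integral_linComb_sq 1 1
  have hminus := hUV.integral_linComb_sq 1 (-1)
  rw [hU, hV, hUV'] at hplus hminus
  have h₁ := integral_nonneg (μ := P) (f := fun ω ↦ (1 * U ω + 1 * V ω) ^ 2) fun ω ↦ sq_nonneg _
  have h₂ := integral_nonneg (μ := P) (f := fun ω ↦ (1 * U ω + -1 * V ω) ^ 2) fun ω ↦ sq_nonneg _
  have hσ2 : 0 < σ ^ 2 := by positivity
  rw [abs_le]
  constructor <;> nlinarith

lemma integral_pow_mul_pow_mul_choose (p : ℕ) :
    (∫ ω, U ω ^ p * V ω ^ p ∂P) * (2 * p).choose p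
      = gaussMoment (2 * p) * σ ^ (2 * p) * (corrPoly p).eval ρ := by
  refine _root_.integral_pow_mul_pow_mul_choose hUV.integrable_pow_mul_pow fun a ↦ ?_
  have h := hUV.integral_linComb_pow_two_mul a 1 p
  have hsq : ∫ ω, (a * U ω + V ω) ^ 2 ∂P = σ ^ 2 * (a ^ 2 + 2 * ρ * a + 1) := by
    have := hUV.integral_linComb_sq a 1
    simp only [one_mul, one_pow, mul_one] at this
    rw [this, hU, hV, hUV']
    ring
  simp only [one_mul] at h
  rw [h, hsq, mul_pow, ← pow_mul]
  ring

end IsCenteredGaussianPair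

lemma isCenteredGaussianPair_fst_snd :
    IsCenteredGaussianPair ((gaussianReal 0 1).prod (gaussianReal 0 1)) Prod.fst Prod.snd := by
  refine ⟨measurable_fst, measurable_snd, fun a b ↦ ?_⟩
  have hfst : ((gaussianReal 0 1).prod (gaussianReal 0 1)).map (fun z ↦ a * z.1)
      = (gaussianReal 0 1).map (a * ·) := by
    rw [show (fun z : ℝ × ℝ ↦ a * z.1) = (a * ·) ∘ Prod.fst from rfl,
      ← Measure.map_map (measurable_const_mul a) measurable_fst, Measure.map_fst_prod,
      measure_univ, one_smul]
  have hsnd : ((gaussianReal 0 1).prod (gaussianReal 0 1)).map (fun z ↦ b * z.2)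
      = (gaussianReal 0 1).map (b * ·) := by
    rw [show (fun z : ℝ × ℝ ↦ b * z.2) = (b * ·) ∘ Prod.snd from rfl,
      ← Measure.map_map (measurable_const_mul b) measurable_snd, Measure.map_snd_prod,
      measure_univ, one_smul]
  rw [gaussianReal_map_const_mul] at hfst hsnd
  have := gaussianReal_add_gaussianReal_of_indepFun
    (indepFun_prod (measurable_const_mul a) (measurable_const_mul b)) hfst hsnd
  rw [mul_zero, mul_zero, add_zero] at this
  exact ⟨_, this⟩

/-- The mixed-moment formula at `ρ = 0`, evaluated on a pair of independent standard
Gaussians. -/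
lemma gaussMoment_sq_mul_choose (p : ℕ) :
    gaussMoment p ^ 2 * (2 * p).choose p = gaussMoment (2 * p) * (corrPoly p).eval 0 := by
  have hfst : ∫ z : ℝ × ℝ, z.1 ^ 2 ∂(gaussianReal 0 1).prod (gaussianReal 0 1) = 1 ^ 2 := by
    rw [integral_fun_fst (fun x : ℝ ↦ x ^ 2)]
    simpa [gaussMoment] using gaussMoment_two
  have hsnd : ∫ z : ℝ × ℝ, z.2 ^ 2 ∂(gaussianReal 0 1).prod (gaussianReal 0 1) = 1 ^ 2 := by
    rw [integral_fun_snd (fun x : ℝ ↦ x ^ 2)]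
    simpa [gaussMoment] using gaussMoment_two
  have hmix : ∫ z : ℝ × ℝ, z.1 * z.2 ∂(gaussianReal 0 1).prod (gaussianReal 0 1) = 1 ^ 2 * 0 := by
    rw [integral_prod_mul (fun x : ℝ ↦ x) (fun x : ℝ ↦ x), integral_id_gaussianReal]
    simp
  have h := isCenteredGaussianPair_fst_snd.integral_pow_mul_pow_mul_choose hfst hsnd hmix p
  rwa [integral_prod_mul (fun x : ℝ ↦ x ^ p) (fun x : ℝ ↦ x ^ p), ← gaussMoment, one_pow,
    mul_one, ← sq] at h

lemma IsCenteredGaussianPair.integral_pow_sub_mul_pow_sub {Ω : Type*} [MeasurableSpace Ω]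
    {P : Measure Ω} [IsProbabilityMeasure P] {U V : Ω → ℝ} (hUV : IsCenteredGaussianPair P U V)
    {σ ρ : ℝ} (hU : ∫ ω, U ω ^ 2 ∂P = σ ^ 2) (hV : ∫ ω, V ω ^ 2 ∂P = σ ^ 2)
    (hUV' : ∫ ω, U ω * V ω ∂P = σ ^ 2 * ρ) (hσ : 0 ≤ σ) (p : ℕ) :
    ∫ ω, (U ω ^ p - gaussMoment p * σ ^ p) * (V ω ^ p - gaussMoment p * σ ^ p) ∂P
      = σ ^ (2 * p) * (gaussMoment (2 * p) / (2 * p).choose p)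
          * ((corrPoly p).eval ρ - (corrPoly p).eval 0) := by
  have hmeanU : ∫ ω, U ω ^ p ∂P = gaussMoment p * σ ^ p := by
    rw [hUV.integral_pow_left, hU, Real.sqrt_sq hσ, mul_comm]
  have hmeanV : ∫ ω, V ω ^ p ∂P = gaussMoment p * σ ^ p := by
    rw [hUV.symm.integral_pow_left, hV, Real.sqrt_sq hσ, mul_comm]
  have hcov := covariance_eq_sub (hUV.memLp_pow p) (hUV.symm.memLp_pow p)
  rw [covariance, hmeanU, hmeanV] at hcov
  have hmix := hUV.integral_pow_mul_pow_mul_choose hU hV hUV' p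
  have hzero := gaussMoment_sq_mul_choose p
  have hchoose : (0 : ℝ) < (2 * p).choose p := by
    exact_mod_cast Nat.choose_pos (by omega)
  simp only [Pi.mul_apply] at hcov
  rw [hcov]
  field_simp
  linear_combination hmix - σ ^ (2 * p) * hzero

lemma Polynomial.exists_abs_eval_sub_eval_zero_le (f : ℝ[X]) :
    ∃ L, 0 ≤ L ∧ ∀ r : ℝ, |r| ≤ 1 → |f.eval r - f.eval 0| ≤ L * |r| := by
  obtain ⟨L, hL⟩ := isCompact_Icc.exists_bound_of_continuousOn
    (f.divX.continuous.continuousOn (s := Set.Icc (-1) 1))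
  refine ⟨L, (norm_nonneg _).trans (hL 0 ⟨by norm_num, by norm_num⟩), fun r hr ↦ ?_⟩
  have h : f.eval r - f.eval 0 = f.divX.eval r * r := by
    conv_lhs => rw [← divX_mul_X_add f]
    simp [coeff_zero_eq_eval_zero]
  rw [h, abs_mul, ← Real.norm_eq_abs (f.divX.eval r)]
  exact mul_le_mul_of_nonneg_right (hL r (abs_le.mp hr)) (abs_nonneg r)

lemma rhoH_zero {H : ℝ} (hH : H ≠ 0) : rhoH H 0 = 1 := by
  simp [rhoH, Real.zero_rpow (mul_ne_zero two_ne_zero hH)]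
  norm_num

namespace IsFBM

variable {Ω : Type*} [MeasurableSpace Ω] {P : Measure Ω} {H : ℝ} {B : ℝ → Ω → ℝ}
  (hB : IsFBM P H B)
include hB

lemma measurable (t : ℝ) : Measurable (B t) := hB.gaussian.1 t

lemma integrable_pow (t : ℝ) (n : ℕ) : Integrable (fun ω ↦ B t ω ^ n) P := by
  obtain ⟨m, v, h⟩ := hB.gaussian.2 1 ![t] ![1]
  simp only [Finset.univ_unique, Fin.default_eq_zero, Matrix.cons_val_fin_one, one_mul,
    Finset.sum_singleton] at h
  exact integrable_pow_of_map_eq_gaussianReal (hB.measurable t).aemeasurable h n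

lemma integrable_mul (s t : ℝ) : Integrable (fun ω ↦ B s ω * B t ω) P := by
  have hmemLp : ∀ t, MemLp (B t) 2 P := fun t ↦
    (memLp_two_iff_integrable_sq (hB.measurable t).aestronglyMeasurable).mpr
      (hB.integrable_pow t 2)
  exact (hmemLp s).integrable_mul (hmemLp t)

lemma map_sum_eq_gaussianReal_zero {n : ℕ} (t c : Fin n → ℝ) (ht : ∀ i, 0 ≤ t i) :
    ∃ v : ℝ≥0, P.map (fun ω ↦ ∑ i, c i * B (t i) ω) = gaussianReal 0 v := by
  obtain ⟨m, v, h⟩ := hB.gaussian.2 n t c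
  have hint : ∀ i, Integrable (fun ω ↦ c i * B (t i) ω) P := fun i ↦ by
    simpa using (hB.integrable_pow (t i) 1).const_mul (c i)
  have hm := integral_of_map_eq_gaussianReal (Finset.aemeasurable_fun_sum _ fun i _ ↦
    ((hB.measurable (t i)).const_mul (c i)).aemeasurable) h
  rw [integral_finsetSum _ fun i _ ↦ hint i] at hm
  simp only [integral_const_mul, hB.centered _ (ht _), mul_zero, Finset.sum_const_zero] at hm
  exact ⟨v, hm ▸ h⟩

lemma isCenteredGaussianPair_sub {a b c d : ℝ} (ha : 0 ≤ a) (hb : 0 ≤ b) (hc : 0 ≤ c)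
    (hd : 0 ≤ d) :
    IsCenteredGaussianPair P (fun ω ↦ B a ω - B b ω) (fun ω ↦ B c ω - B d ω) := by
  refine ⟨(hB.measurable a).sub (hB.measurable b), (hB.measurable c).sub (hB.measurable d),
    fun x y ↦ ?_⟩
  obtain ⟨v, h⟩ := hB.map_sum_eq_gaussianReal_zero ![a, b, c, d] ![x, -x, y, -y]
    (by simp [Fin.forall_fin_succ, ha, hb, hc, hd])
  refine ⟨v, Eq.trans ?_ h⟩
  congr 1 with ω
  simp only [Fin.sum_univ_four, Matrix.cons_val_zero, Matrix.cons_val_one, Matrix.cons_val_two,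
    Matrix.cons_val_three, Matrix.head_cons, Matrix.tail_cons]
  ring

lemma integral_sub_mul_sub {a b c d : ℝ} (ha : 0 ≤ a) (hb : 0 ≤ b) (hc : 0 ≤ c)
    (hd : 0 ≤ d) :
    ∫ ω, (B a ω - B b ω) * (B c ω - B d ω) ∂P
      = (1 / 2) * (|c - b| ^ (2 * H) + |d - a| ^ (2 * H) - |c - a| ^ (2 * H)
          - |d - b| ^ (2 * H)) := by
  have hexpand : ∀ ω, (B a ω - B b ω) * (B c ω - B d ω)
      = (B a ω * B c ω - B a ω * B d ω) - (B b ω * B c ω - B b ω * B d ω) := fun ω ↦ by ring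
  simp_rw [hexpand]
  rw [integral_sub (by exact (hB.integrable_mul a c).sub (hB.integrable_mul a d))
      (by exact (hB.integrable_mul b c).sub (hB.integrable_mul b d)),
    integral_sub (hB.integrable_mul a c) (hB.integrable_mul a d),
    integral_sub (hB.integrable_mul b c) (hB.integrable_mul b d),
    hB.cov a c ha hc, hB.cov a d ha hd, hB.cov b c hb hc, hB.cov b d hb hd]
  ring

lemma integral_increment_mul_increment {N : ℝ} (hN : 0 < N) (k l : ℕ) :
    ∫ ω, (B (((k : ℝ) + 1) / N) ω - B ((k : ℝ) / N) ω)
        * (B (((l : ℝ) + 1) / N) ω - B ((l : ℝ) / N) ω) ∂P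
      = ((N⁻¹) ^ H) ^ 2 * rhoH H ((k : ℤ) - (l : ℤ)) := by
  have hscale : ∀ x : ℝ, |x / N| ^ (2 * H) = ((N⁻¹) ^ H) ^ 2 * |x| ^ (2 * H) := fun x ↦ by
    rw [abs_div, abs_of_pos hN, div_eq_inv_mul, Real.mul_rpow (by positivity) (abs_nonneg x),
      ← Real.rpow_natCast, ← Real.rpow_mul (by positivity), Nat.cast_ofNat, mul_comm H]
  rw [hB.integral_sub_mul_sub (by positivity) (by positivity) (by positivity) (by positivity),
    show ((l : ℝ) + 1) / N - (k / N) = (l - k + 1) / N by ring,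
    show (l : ℝ) / N - ((k + 1) / N) = (l - k - 1) / N by ring,
    show ((l : ℝ) + 1) / N - ((k + 1) / N) = (l - k) / N by ring,
    show (l : ℝ) / N - (k / N) = (l - k) / N by ring, hscale, hscale, hscale, rhoH,
    abs_sub_comm (l : ℝ), show (l : ℝ) - k + 1 = -(k - l - 1) by ring,
    show (l : ℝ) - k - 1 = -(k - l + 1) by ring, abs_neg, abs_neg]
  push_cast
  ring

section Increments

variable (hH : H ≠ 0) {N : ℝ} (hN : 0 < N) (i j : ℕ)
include hH hN

lemma integral_increment_sq :
    ∫ ω, (B (((i : ℝ) + 1) / N) ω - B ((i : ℝ) / N) ω) ^ 2 ∂P = ((N⁻¹) ^ H) ^ 2 := by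
  simpa [sq, rhoH_zero hH] using hB.integral_increment_mul_increment hN i i

lemma abs_rhoH_le_one : |rhoH H ((i : ℤ) - (j : ℤ))| ≤ 1 :=
  (hB.isCenteredGaussianPair_sub (by positivity) (by positivity) (by positivity)
    (by positivity)).abs_le_one (hB.integral_increment_sq hH hN i)
    (hB.integral_increment_sq hH hN j) (hB.integral_increment_mul_increment hN i j)
    (by positivity)

lemma integral_increment_pow_sub_mul_pow_sub [IsProbabilityMeasure P] {p : ℕ}
    (hpH : (p : ℝ) * H = 1) :
    ∫ ω, ((B (((i : ℝ) + 1) / N) ω - B ((i : ℝ) / N) ω) ^ p - gaussMoment p / N)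
        * ((B (((j : ℝ) + 1) / N) ω - B ((j : ℝ) / N) ω) ^ p - gaussMoment p / N) ∂P
      = (N ^ 2)⁻¹ * (gaussMoment (2 * p) / (2 * p).choose p)
          * ((corrPoly p).eval (rhoH H ((i : ℤ) - (j : ℤ))) - (corrPoly p).eval 0) := by
  have hσ : ((N⁻¹) ^ H) ^ p = N⁻¹ := by
    rw [← Real.rpow_natCast, ← Real.rpow_mul (by positivity), mul_comm, hpH, Real.rpow_one]
  have hmean : gaussMoment p / N = gaussMoment p * ((N⁻¹) ^ H) ^ p := by
    rw [hσ, div_eq_mul_inv]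
  have hvar : (N ^ 2)⁻¹ = ((N⁻¹) ^ H) ^ (2 * p) := by
    rw [mul_comm, pow_mul, hσ, inv_pow]
  rw [hmean, hvar]
  exact (hB.isCenteredGaussianPair_sub (by positivity) (by positivity) (by positivity)
    (by positivity)).integral_pow_sub_mul_pow_sub (hB.integral_increment_sq hH hN i)
    (hB.integral_increment_sq hH hN j) (hB.integral_increment_mul_increment hN i j)
    (by positivity) p

end Increments

end IsFBM

theorem stmt_13_general {Ω : Type*} [MeasurableSpace Ω] (P : Measure Ω) [IsProbabilityMeasure P]
    (H : ℝ) (B : ℝ → Ω → ℝ) (hB : IsFBM P H B)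
    (p : ℕ) (hpH : (p : ℝ) * H = 1) :
    ∃ C > 0, ∀ N : ℕ, 1 ≤ N → ∀ i j : ℕ, i ≠ j →
      |∫ ω, ((B (((i:ℝ)+1)/N) ω - B ((i:ℝ)/N) ω) ^ p - gaussMoment p / N) *
          ((B (((j:ℝ)+1)/N) ω - B ((j:ℝ)/N) ω) ^ p - gaussMoment p / N) ∂P|
        ≤ C / (N:ℝ)^2 * |rhoH H ((i:ℤ) - (j:ℤ))| := by
  have hH : H ≠ 0 := by
    rintro rfl
    simp at hpH
  obtain ⟨L, hL0, hL⟩ := (corrPoly p).exists_abs_eval_sub_eval_zero_le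
  set K := gaussMoment (2 * p) / (2 * p).choose p
  refine ⟨|K| * L + 1, by positivity, fun N hN i j _ ↦ ?_⟩
  have hNpos : (0 : ℝ) < N := by exact_mod_cast hN
  set ρ := rhoH H ((i : ℤ) - (j : ℤ))
  have hρ : |ρ| ≤ 1 := hB.abs_rhoH_le_one hH hNpos i j
  have hpoly : |K| * |(corrPoly p).eval ρ - (corrPoly p).eval 0| ≤ (|K| * L + 1) * |ρ| :=
    calc |K| * |(corrPoly p).eval ρ - (corrPoly p).eval 0| ≤ |K| * (L * |ρ|) := by
          gcongr
          exact hL ρ hρ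
      _ ≤ (|K| * L + 1) * |ρ| := by nlinarith [abs_nonneg ρ]
  rw [hB.integral_increment_pow_sub_mul_pow_sub hH hNpos i j hpH]
  calc |((N : ℝ) ^ 2)⁻¹ * K * ((corrPoly p).eval ρ - (corrPoly p).eval 0)|
      = ((N : ℝ) ^ 2)⁻¹ * (|K| * |(corrPoly p).eval ρ - (corrPoly p).eval 0|) := by
        rw [abs_mul, abs_mul, abs_of_pos (by positivity), mul_assoc]
    _ ≤ ((N : ℝ) ^ 2)⁻¹ * ((|K| * L + 1) * |ρ|) := by gcongr
    _ = (|K| * L + 1) / (N : ℝ) ^ 2 * |ρ| := by ring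

/-- For a fBm with Hurst index `H ∈ (0,1)` such that `p = 1/H` is a positive
integer, with `t_i = i/N`: there is `C > 0` such that for every `N ≥ 1` and all
`i ≠ j`,
`|E[((B_{t_{i+1}}-B_{t_i})^p - E[Z^p]/N)((B_{t_{j+1}}-B_{t_j})^p - E[Z^p]/N)]|
  ≤ C N^{-2} |ρ_H(i-j)|`. -/
theorem stmt_13 {Ω : Type*} [MeasurableSpace Ω] (P : Measure Ω) [IsProbabilityMeasure P]
    (H : ℝ) (hH : H ∈ Set.Ioo (0:ℝ) 1) (B : ℝ → Ω → ℝ) (hB : IsFBM P H B)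
    (p : ℕ) (hp : 1 ≤ p) (hpH : (p : ℝ) * H = 1) :
    ∃ C > 0, ∀ N : ℕ, 1 ≤ N → ∀ i j : ℕ, i ≠ j →
      |∫ ω, ((B (((i:ℝ)+1)/N) ω - B ((i:ℝ)/N) ω) ^ p - gaussMoment p / N) *
          ((B (((j:ℝ)+1)/N) ω - B ((j:ℝ)/N) ω) ^ p - gaussMoment p / N) ∂P|
        ≤ C / (N:ℝ)^2 * |rhoH H ((i:ℤ) - (j:ℤ))| :=
  stmt_13_general P H B hB p hpH
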